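/- For every x₁ ∈ (1,3]: φ(x₁,3,3,1,3,3) = (19 − x₁)/(x₁ + 17), φ(x₁,3,1,1,3,1) = (−x₁² + 10x₁ + 7)/(x₁² + 6x₁ + 9), and φ(x₁,3,3,1,3,1) = (−x₁² + 12x₁ + 13)/((x₁ + 3)·√(x₁² + 18x₁ + 17)); moreover each of these three quantities is strictly less than 1. -/
import Mathlib

open Real

/-- The cosine of the dihedral angle at the edge `e₁` of a generalized hyper-ideal
tetrahedron whose edge lengths `lᵢ` satisfy `cosh lᵢ = xᵢ`. -/
noncomputable def phi (x1 x2 x3 x4 x5 x6 : ℝ) : ℝ :=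
  (x2 * x3 + x5 * x6 + x1 * x2 * x5 + x1 * x3 * x6 - x1 ^ 2 * x4 + x4) /
    (Real.sqrt (2 * x1 * x2 * x6 + x1 ^ 2 + x2 ^ 2 + x6 ^ 2 - 1) *
      Real.sqrt (2 * x1 * x3 * x5 + x1 ^ 2 + x3 ^ 2 + x5 ^ 2 - 1))

theorem phi_three_special_values (x1 : ℝ) (h1 : 1 < x1) (h3 : x1 ≤ 3) :
    phi x1 3 3 1 3 3 = (19 - x1) / (x1 + 17) ∧
      phi x1 3 1 1 3 1 = (-x1 ^ 2 + 10 * x1 + 7) / (x1 ^ 2 + 6 * x1 + 9) ∧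
      phi x1 3 3 1 3 1 =
        (-x1 ^ 2 + 12 * x1 + 13) / ((x1 + 3) * Real.sqrt (x1 ^ 2 + 18 * x1 + 17)) ∧
      phi x1 3 3 1 3 3 < 1 ∧ phi x1 3 1 1 3 1 < 1 ∧ phi x1 3 3 1 3 1 < 1 := by
  have hspos : (0:ℝ) < x1 ^ 2 + 18 * x1 + 17 := by nlinarith
  set s := Real.sqrt (x1 ^ 2 + 18 * x1 + 17) with hsdef
  have hs2 : s ^ 2 = x1 ^ 2 + 18 * x1 + 17 := Real.sq_sqrt hspos.le
  have hsp : 0 < s := Real.sqrt_pos.mpr hspos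
  have h3p : (0:ℝ) < x1 + 3 := by linarith
  have hsq3 : Real.sqrt (x1 ^ 2 + 6 * x1 + 9) = x1 + 3 := by
    rw [show x1 ^ 2 + 6 * x1 + 9 = (x1 + 3) ^ 2 by ring, Real.sqrt_sq h3p.le]
  have e1 : phi x1 3 3 1 3 3 = (19 - x1) / (x1 + 17) := by
    unfold phi
    rw [show 2 * x1 * 3 * 3 + x1 ^ 2 + 3 ^ 2 + 3 ^ 2 - 1 = x1 ^ 2 + 18 * x1 + 17 by ring,
      ← hsdef, show s * s = x1 ^ 2 + 18 * x1 + 17 by rw [← hs2]; ring]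
    rw [div_eq_div_iff (by positivity) (by linarith)]
    ring
  have e2 : phi x1 3 1 1 3 1 = (-x1 ^ 2 + 10 * x1 + 7) / (x1 ^ 2 + 6 * x1 + 9) := by
    unfold phi
    rw [show 2 * x1 * 3 * 1 + x1 ^ 2 + 3 ^ 2 + 1 ^ 2 - 1 = x1 ^ 2 + 6 * x1 + 9 by ring,
      show 2 * x1 * 1 * 3 + x1 ^ 2 + 1 ^ 2 + 3 ^ 2 - 1 = x1 ^ 2 + 6 * x1 + 9 by ring,
      hsq3, show (x1 + 3) * (x1 + 3) = x1 ^ 2 + 6 * x1 + 9 by ring]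
    rw [div_eq_div_iff (by positivity) (by positivity)]
    ring
  have e3 : phi x1 3 3 1 3 1 =
      (-x1 ^ 2 + 12 * x1 + 13) / ((x1 + 3) * s) := by
    unfold phi
    rw [show 2 * x1 * 3 * 1 + x1 ^ 2 + 3 ^ 2 + 1 ^ 2 - 1 = x1 ^ 2 + 6 * x1 + 9 by ring,
      show 2 * x1 * 3 * 3 + x1 ^ 2 + 3 ^ 2 + 3 ^ 2 - 1 = x1 ^ 2 + 18 * x1 + 17 by ring,
      hsq3, ← hsdef]
    congr 1
    ring
  refine ⟨e1, e2, e3, ?_, ?_, ?_⟩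
  · rw [e1, div_lt_one (by linarith)]; linarith
  · rw [e2, div_lt_one (by positivity)]; nlinarith
  · rw [e3, div_lt_one (by positivity)]
    have hsum : 0 < (x1 + 3) * s + (-x1 ^ 2 + 12 * x1 + 13) := by
      nlinarith [mul_pos h3p hsp]
    nlinarith [hs2, mul_pos h3p hsp, hsum,
      mul_pos (mul_pos (show (0:ℝ) < 3 * x1 + 1 by linarith)
        (show (0:ℝ) < x1 - 1 by linarith)) (show (0:ℝ) < x1 + 1 by linarith)]
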